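/- Let X be a real Banach space, let A : X ⇉ X* be monotone, and let B : X ⇉ X* be maximally monotone. Let (z, z*) ∈ X × X*, let x₀ ∈ dom A ∩ int(dom B), and suppose there exist λ ∈ [0, 1) and a sequence (aₙ) in dom A ∩ dom B such that aₙ → x₀ + λ(z − x₀) in norm and aₙ lies in the boundary of dom B for every n. Then F_{A+B}(z, z*) = +∞. -/

import Mathlib

open Set Filter Topology

noncomputable section

variable {X : Type*} [NormedAddCommGroup X] [NormedSpace ℝ X]

/-- A set-valued operator `A : X ⇉ X*`, identified with its graph,
is monotone if `⟨x − y, x* − y*⟩ ≥ 0` for all `(x, x*), (y, y*)` in the graph. -/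
def IsMonotoneOp (A : Set (X × (X →L[ℝ] ℝ))) : Prop :=
  ∀ p ∈ A, ∀ q ∈ A, 0 ≤ (p.2 - q.2) (p.1 - q.1)

/-- `A` is maximally monotone if it is monotone and its graph is not properly contained
in the graph of any monotone operator. -/
def IsMaxMonotoneOp (A : Set (X × (X →L[ℝ] ℝ))) : Prop :=
  IsMonotoneOp A ∧ ∀ B : Set (X × (X →L[ℝ] ℝ)), IsMonotoneOp B → A ⊆ B → B = A

/-- The domain of a set-valued operator. -/
def opDom (A : Set (X × (X →L[ℝ] ℝ))) : Set X :=
  {x | ∃ xs, (x, xs) ∈ A}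

/-- `(z, z*)` is monotonically related to `S` if `⟨z − y, z* − y*⟩ ≥ 0` for all `(y, y*) ∈ S`. -/
def MonotonicallyRelated (S : Set (X × (X →L[ℝ] ℝ))) (p : X × (X →L[ℝ] ℝ)) : Prop :=
  ∀ q ∈ S, 0 ≤ (p.2 - q.2) (p.1 - q.1)

/-- A maximally monotone operator `A` is of type (FPV) if for every open convex set `U`
meeting `dom A`, every `(x, x*)` with `x ∈ U` monotonically related to
`gra A ∩ (U × X*)` belongs to `gra A`. -/
def IsFPV (A : Set (X × (X →L[ℝ] ℝ))) : Prop :=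
  IsMaxMonotoneOp A ∧
    ∀ U : Set X, IsOpen U → Convex ℝ U → (U ∩ opDom A).Nonempty →
      ∀ x : X, ∀ xs : X →L[ℝ] ℝ, x ∈ U →
        MonotonicallyRelated (A ∩ (U ×ˢ (univ : Set (X →L[ℝ] ℝ)))) (x, xs) →
        (x, xs) ∈ A

/-- The graph of the sum `A + B`: `(A + B)x = {a* + b* : a* ∈ A x, b* ∈ B x}`. -/
def opSum (A B : Set (X × (X →L[ℝ] ℝ))) : Set (X × (X →L[ℝ] ℝ)) :=
  {p | ∃ as bs, (p.1, as) ∈ A ∧ (p.1, bs) ∈ B ∧ p.2 = as + bs}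

/-- The star (centre) of a set `C`: points `x ∈ C` with `[x, c] ⊆ C` for all `c ∈ C`. -/
def starSet (C : Set X) : Set X :=
  {x ∈ C | ∀ c ∈ C, segment ℝ x c ⊆ C}

/-- The Fitzpatrick function of `A`:
`F_A(x, x*) = sup_{(a, a*) ∈ gra A} (⟨x, a*⟩ + ⟨a, x*⟩ − ⟨a, a*⟩)`, with values in `(−∞, +∞]`. -/
def fitz (A : Set (X × (X →L[ℝ] ℝ))) (p : X × (X →L[ℝ] ℝ)) : EReal :=
  ⨆ q ∈ A, ((q.2 p.1 + p.2 q.1 - q.2 q.1 : ℝ) : EReal)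

/-!
By Rockafellar's theorem `int (conv (dom B)) ⊆ dom B`, so `int (dom B)` is convex. Near the limit
`x₀ + λ(z - x₀)`, a boundary point `aₙ` of `dom B` can therefore be separated from `int (dom B)`
by a functional `f` with `f ≤ f aₙ` on `dom B`, and by maximality `(aₙ, b* + t f) ∈ gra B` for
all `t ≥ 0`. Since `z` lies beyond `aₙ` on a ray issuing from an interior point, `f (z - aₙ) > 0`,
so the Fitzpatrick function of `A + B` at `(z, z*)` grows linearly in `t`.

Rockafellar's theorem: the sets `{y | ∃ y*, ‖y*‖ ≤ n ∧ F_B(y, y*) ≤ n}` are closed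
(Banach–Alaoglu), convex and cover `conv (dom B)`, so by Baire one of them contains a ball around
a given `x ∈ int (conv (dom B))`. Averaging the monotonicity inequalities over this ball shows
that the graph of `B`, seen from `x`, lies above a cone `-R‖·‖`; a Farkas-type Hahn–Banach
argument then yields `x*` monotonically related to `gra B`, and maximality gives
`(x, x*) ∈ gra B`.
-/

section

variable {A B : Set (X × (X →L[ℝ] ℝ))}

lemma fitz_le_coe_iff {p : X × (X →L[ℝ] ℝ)} {c : ℝ} :
    fitz A p ≤ c ↔ ∀ q ∈ A, q.2 p.1 + p.2 q.1 - q.2 q.1 ≤ c := by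
  simp only [fitz, iSup₂_le_iff, EReal.coe_le_coe_iff]

lemma fitz_eq_top_iff {p : X × (X →L[ℝ] ℝ)} :
    fitz A p = ⊤ ↔ ∀ c : ℝ, ∃ q ∈ A, c < q.2 p.1 + p.2 q.1 - q.2 q.1 := by
  simp only [EReal.eq_top_iff_forall_lt, ← not_le, fitz_le_coe_iff]
  push Not
  rfl

lemma fitz_eq_top_of_forall_add_smul_mem {x z : X} {xs zs f : X →L[ℝ] ℝ}
    (hA : ∀ t : ℝ, 0 ≤ t → (x, xs + t • f) ∈ A) (hf : f x < f z) :
    fitz A (z, zs) = ⊤ := by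
  rw [fitz_eq_top_iff]
  intro c
  have hgrowth : Tendsto (fun t => xs z + zs x - xs x + t * (f z - f x)) atTop atTop :=
    tendsto_atTop_add_const_left _ _ (tendsto_id.atTop_mul_const (sub_pos.2 hf))
  obtain ⟨t, hc, ht⟩ := ((hgrowth.eventually_gt_atTop c).and (eventually_ge_atTop 0)).exists
  refine ⟨_, hA t ht, hc.trans_eq ?_⟩
  simp only [add_apply, smul_apply, smul_eq_mul]
  ring

lemma IsMaxMonotoneOp.mem_of_monotonicallyRelated (hB : IsMaxMonotoneOp B)
    {p : X × (X →L[ℝ] ℝ)} (hp : MonotonicallyRelated B p) : p ∈ B := by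
  have hmono : IsMonotoneOp (insert p B) := by
    rintro q (rfl | hq) q' (rfl | hq')
    · simp
    · exact hp q' hq'
    · have h := hp q hq
      simp only [sub_apply, map_sub] at h ⊢
      linarith
    · exact hB.1 q hq q' hq'
  rw [← hB.2 _ hmono (subset_insert p B)]
  exact mem_insert p B

lemma IsMaxMonotoneOp.add_smul_mem (hB : IsMaxMonotoneOp B) {x : X} {xs f : X →L[ℝ] ℝ}
    (hx : (x, xs) ∈ B) (hf : ∀ y ∈ opDom B, f y ≤ f x) {t : ℝ} (ht : 0 ≤ t) :
    (x, xs + t • f) ∈ B := by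
  refine hB.mem_of_monotonicallyRelated fun q hq => ?_
  have hmono := hB.1 _ hx q hq
  have hfq := hf q.1 ⟨q.2, hq⟩
  simp only [sub_apply, add_apply, smul_apply, map_sub, smul_eq_mul] at hmono ⊢
  nlinarith

lemma exists_mem_ball_smul_sub_eq_smul_sub {x₀ z a : X} {lam r : ℝ} (hlam1 : lam < 1)
    (ha : dist a (x₀ + lam • (z - x₀)) < (1 - lam) * r) :
    ∃ y ∈ Metric.ball x₀ r, lam • (z - a) = (1 - lam) • (a - y) := by
  have hlam : 0 < 1 - lam := sub_pos.2 hlam1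
  refine ⟨x₀ + (1 - lam)⁻¹ • (a - (x₀ + lam • (z - x₀))), ?_, ?_⟩
  · rw [Metric.mem_ball, dist_eq_norm, add_sub_cancel_left, norm_smul, norm_inv,
      Real.norm_of_nonneg hlam.le, ← dist_eq_norm, inv_mul_lt_iff₀ hlam]
    exact ha
  · rw [smul_sub (1 - lam) a, smul_add, smul_smul, mul_inv_cancel₀ hlam.ne', one_smul]
    module

lemma Convex.exists_forall_le_of_notMem_interior {C : Set X} (hC : Convex ℝ C)
    (hint : (interior C).Nonempty) {a : X} (ha : a ∉ interior C) :
    ∃ f : X →L[ℝ] ℝ, (∀ y ∈ interior C, f y < f a) ∧ ∀ y ∈ C, f y ≤ f a := by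
  obtain ⟨f, hf⟩ := geometric_hahn_banach_open_point hC.interior isOpen_interior ha
  refine ⟨f, hf, fun y hy => ?_⟩
  have hcl : closure (interior C) ⊆ {y | f y ≤ f a} :=
    closure_minimal (fun y hy => (hf y hy).le) (isClosed_le f.continuous continuous_const)
  rw [hC.closure_interior_eq_closure_of_nonempty_interior hint] at hcl
  exact hcl (subset_closure hy)

lemma ContinuousLinearMap.mul_norm_le_of_forall_ball_le {f : X →L[ℝ] ℝ} {r c : ℝ} (hr : 0 < r)
    (hf : ∀ h ∈ Metric.ball (0 : X) r, f h ≤ c) : r * ‖f‖ ≤ c := by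
  by_contra! hlt
  obtain ⟨u, hu, hcu⟩ := f.exists_lt_apply_of_lt_opNorm ((div_lt_iff₀' hr).2 hlt)
  obtain ⟨v, hv, hfv⟩ : ∃ v : X, ‖v‖ < 1 ∧ f v = |f u| := by
    rcases abs_choice (f u) with h | h
    · exact ⟨u, hu, h.symm⟩
    · exact ⟨-u, by rwa [norm_neg], by rw [map_neg, h]⟩
  have hmem : r • v ∈ Metric.ball (0 : X) r := by
    rw [mem_ball_zero_iff, norm_smul, Real.norm_of_nonneg hr.le]
    nlinarith [norm_nonneg v]
  have := hf _ hmem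
  rw [map_smul, smul_eq_mul, hfv, ← Real.norm_eq_abs] at this
  rw [div_lt_iff₀' hr] at hcu
  linarith

lemma neg_mul_norm_le_of_mem_pointedConeHull {S : Set (X × ℝ)} {R : ℝ}
    (hS : ∀ k ∈ convexHull ℝ S, -(R * ‖k.1‖) ≤ k.2) {k : X × ℝ}
    (hk : k ∈ PointedCone.hull ℝ S) : -(R * ‖k.1‖) ≤ k.2 := by
  have hcone : k = 0 ∨ k ∈ ConvexCone.hull ℝ (convexHull ℝ S) := by
    induction hk using Submodule.span_induction with
    | mem x hx => exact Or.inr (ConvexCone.subset_hull (subset_convexHull ℝ S hx))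
    | zero => exact Or.inl rfl
    | add x y _ _ hx hy =>
      rcases hx with rfl | hx
      · simpa using hy
      rcases hy with rfl | hy
      · simpa using Or.inr hx
      exact Or.inr (ConvexCone.add_mem _ hx hy)
    | smul c x _ hx =>
      rcases hx with rfl | hx
      · simp
      rcases eq_or_lt_of_le c.2 with hc | hc
      · rw [show c = 0 from Subtype.ext hc.symm, zero_smul]
        exact Or.inl rfl
      · rw [← Nonneg.coe_smul]
        exact Or.inr (ConvexCone.smul_mem _ hc hx)
  rcases hcone with rfl | hk
  · simp
  obtain ⟨c, hc, m, hm, rfl⟩ := ((ConvexCone.mem_hull_of_convex (convex_convexHull ℝ S)).1 hk)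
  have := mul_le_mul_of_nonneg_left (hS m hm) hc.le
  simp only [Prod.smul_fst, Prod.smul_snd, norm_smul, Real.norm_of_nonneg hc.le, smul_eq_mul]
  linarith

/-- A Farkas lemma, by the Riesz extension theorem applied to the cone generated by `S` and the
epigraph of `R‖·‖`, extending `(0, t) ↦ t`. -/
theorem exists_norm_le_forall_le_of_convexHull {S : Set (X × ℝ)} {R : ℝ} (hR : 0 ≤ R)
    (hS : ∀ k ∈ convexHull ℝ S, -(R * ‖k.1‖) ≤ k.2) :
    ∃ g : X →L[ℝ] ℝ, ‖g‖ ≤ R ∧ ∀ k ∈ S, g k.1 ≤ k.2 := by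
  let W : PointedCone ℝ (X × ℝ) :=
    { carrier := {k | R * ‖k.1‖ ≤ k.2}
      zero_mem' := by simp
      add_mem' := fun {a b} ha hb => by
        have := norm_add_le a.1 b.1
        simp only [mem_ofPred_eq, Prod.fst_add, Prod.snd_add] at ha hb ⊢
        nlinarith
      smul_mem' := fun c a ha => by
        have := mul_le_mul_of_nonneg_left (show R * ‖a.1‖ ≤ a.2 from ha) c.2
        simp only [mem_ofPred_eq, Prod.smul_fst, Prod.smul_snd, ← Nonneg.coe_smul, smul_eq_mul,
          norm_smul, Real.norm_of_nonneg c.2]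
        linarith }
  let f : (X × ℝ) →ₗ.[ℝ] ℝ := (LinearMap.snd ℝ X ℝ).toPMap (LinearMap.ker (LinearMap.fst ℝ X ℝ))
  obtain ⟨ℓ, hℓf, hℓ_nonneg⟩ := riesz_extension (PointedCone.hull ℝ S ⊔ W) f
    (fun k hk => by
      obtain ⟨a, ha, b, hb, hab⟩ := Submodule.mem_sup.1 hk
      have hk0 : (k : X × ℝ).1 = 0 := k.2
      have hb1 : b.1 = -a.1 := by rw [eq_neg_iff_add_eq_zero, add_comm, ← Prod.fst_add, hab, hk0]
      have ha' := neg_mul_norm_le_of_mem_pointedConeHull hS ha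
      have hb' : R * ‖b.1‖ ≤ b.2 := hb
      rw [hb1, norm_neg] at hb'
      change 0 ≤ (k : X × ℝ).2
      rw [← hab, Prod.snd_add]
      linarith)
    (fun y => ⟨⟨(0, R * ‖y.1‖ - y.2), LinearMap.mem_ker.2 rfl⟩,
      Submodule.mem_sup_right (show R * ‖(0 + y.1)‖ ≤ R * ‖y.1‖ - y.2 + y.2 by simp)⟩)
  let ψ : X →ₗ[ℝ] ℝ := -ℓ.comp (LinearMap.inl ℝ X ℝ)
  have hℓ_apply (k : X × ℝ) : ℓ k = k.2 - ψ k.1 := by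
    have h0 : ℓ (0, k.2) = k.2 := hℓf ⟨(0, k.2), LinearMap.mem_ker.2 rfl⟩
    rw [← Prod.fst_add_snd k, map_add]
    simp [ψ, h0, add_comm]
  have hW (k : X × ℝ) (hk : R * ‖k.1‖ ≤ k.2) : ψ k.1 ≤ k.2 := by
    have := hℓ_nonneg k (Submodule.mem_sup_right hk)
    rw [hℓ_apply] at this
    linarith
  have hbound (x : X) : ‖ψ x‖ ≤ R * ‖x‖ := by
    have h₁ := hW (x, R * ‖x‖) le_rfl
    have h₂ := hW (-x, R * ‖x‖) (by simp)
    rw [map_neg] at h₂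
    exact abs_le.2 ⟨by linarith, h₁⟩
  refine ⟨ψ.mkContinuous R hbound, LinearMap.mkContinuous_norm_le ψ hR hbound, fun k hk => ?_⟩
  have := hℓ_nonneg k (Submodule.mem_sup_left (PointedCone.subset_hull hk))
  rw [hℓ_apply] at this
  simpa using this

lemma exists_mem_interior_of_mem_interior_iUnion [CompleteSpace X] {E : ℕ → Set X}
    (hmono : Monotone E) (hclosed : ∀ n, IsClosed (E n)) (hconv : ∀ n, Convex ℝ (E n)) {x : X}
    (hx : x ∈ interior (⋃ n, E n)) : ∃ n, x ∈ interior (E n) := by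
  obtain ⟨ρ, hρ, hball⟩ := Metric.isOpen_iff.1 isOpen_interior x hx
  set U := Metric.ball x ρ
  have hdense : Dense (⋃ n, interior (E n ∪ Uᶜ)) := by
    refine dense_iUnion_interior_of_closed (fun n => (hclosed n).union
      Metric.isOpen_ball.isClosed_compl) (eq_univ_of_forall fun y => ?_)
    by_cases hy : y ∈ U
    · obtain ⟨n, hn⟩ := mem_iUnion.1 (interior_subset (hball hy))
      exact mem_iUnion.2 ⟨n, Or.inl hn⟩
    · exact mem_iUnion.2 ⟨0, Or.inr hy⟩
  obtain ⟨w, hwF, hwU⟩ := hdense.exists_mem_open Metric.isOpen_ball ⟨x, Metric.mem_ball_self hρ⟩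
  obtain ⟨n, hwn⟩ := mem_iUnion.1 hwF
  have hw : w ∈ interior (E n) := by
    refine interior_maximal (fun y hy => ?_) (isOpen_interior.inter Metric.isOpen_ball) ⟨hwn, hwU⟩
    exact (interior_subset hy.1).resolve_right (not_not.2 hy.2)
  -- `x` is the midpoint of the interior point `w` and its reflection `x + (x - w)`.
  have hw' : x + (x - w) ∈ U := by
    rw [Metric.mem_ball, dist_eq_norm, add_sub_cancel_left, ← dist_eq_norm']
    exact hwU
  obtain ⟨m, hm⟩ := mem_iUnion.1 (interior_subset (hball hw'))
  refine ⟨max n m, (hconv _).openSegment_interior_self_subset_interior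
    (interior_mono (hmono (le_max_left n m)) hw) (hmono (le_max_right n m) hm) ?_⟩
  exact ⟨1 / 2, 1 / 2, by norm_num, by norm_num, by norm_num, by module⟩

def fitzLevelDom (B : Set (X × (X →L[ℝ] ℝ))) (r : ℝ) : Set X :=
  {y | ∃ ys : X →L[ℝ] ℝ, ‖ys‖ ≤ r ∧ fitz B (y, ys) ≤ r}

lemma fitzLevelDom_mono : Monotone (fitzLevelDom B) := by
  rintro r s hrs y ⟨ys, hys, hfitz⟩
  exact ⟨ys, hys.trans hrs, hfitz.trans (EReal.coe_le_coe_iff.2 hrs)⟩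

lemma convex_fitzLevelDom (r : ℝ) : Convex ℝ (fitzLevelDom B r) := by
  rintro y₁ ⟨ys₁, hys₁, hfitz₁⟩ y₂ ⟨ys₂, hys₂, hfitz₂⟩ a b ha hb hab
  rw [fitz_le_coe_iff] at hfitz₁ hfitz₂
  have hnorm := convex_closedBall (0 : X →L[ℝ] ℝ) r (mem_closedBall_zero_iff.2 hys₁)
    (mem_closedBall_zero_iff.2 hys₂) ha hb hab
  refine ⟨a • ys₁ + b • ys₂, mem_closedBall_zero_iff.1 hnorm, fitz_le_coe_iff.2 fun q hq => ?_⟩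
  have h₁ := mul_le_mul_of_nonneg_left (hfitz₁ q hq) ha
  have h₂ := mul_le_mul_of_nonneg_left (hfitz₂ q hq) hb
  simp only [map_add, map_smul, add_apply, smul_apply, smul_eq_mul] at h₁ h₂ ⊢
  rw [← one_mul r, ← hab, ← one_mul (q.2 q.1), ← hab]
  linarith

/-- Banach–Alaoglu: this is the projection of a closed subset of `X × K`, where `K` is the
weak-* compact ball of radius `r` in `X*`. -/
lemma isClosed_fitzLevelDom (r : ℝ) : IsClosed (fitzLevelDom B r) := by
  set K := WeakDual.toStrongDual ⁻¹' Metric.closedBall (0 : X →L[ℝ] ℝ) r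
  have : CompactSpace K := isCompact_iff_compactSpace.1 (WeakDual.isCompact_closedBall 0 r)
  set T : Set (X × K) := {p | ∀ q ∈ B, q.2 p.1 + (p.2 : WeakDual ℝ X) q.1 - q.2 q.1 ≤ r}
  have hT : IsClosed T := by
    simp only [T, ofPred_forall]
    refine isClosed_biInter fun q _ => isClosed_le ?_ continuous_const
    exact ((q.2.continuous.comp continuous_fst).add
      ((WeakDual.eval_continuous q.1).comp (continuous_subtype_val.comp continuous_snd))).sub
      continuous_const
  convert isClosedMap_fst_of_compactSpace T hT
  ext y
  constructor
  · rintro ⟨ys, hys, hfitz⟩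
    exact ⟨(y, ⟨WeakDual.toStrongDual.symm ys, by simpa [K] using hys⟩),
      fitz_le_coe_iff.1 hfitz, rfl⟩
  · rintro ⟨⟨y, ys, hys⟩, hT, rfl⟩
    exact ⟨WeakDual.toStrongDual ys, by simpa [K] using hys, fitz_le_coe_iff.2 hT⟩

lemma IsMonotoneOp.opDom_subset_iUnion_fitzLevelDom (hB : IsMonotoneOp B) :
    opDom B ⊆ ⋃ n : ℕ, fitzLevelDom B n := by
  rintro y ⟨ys, hy⟩
  obtain ⟨n, hn⟩ := exists_nat_ge (max ‖ys‖ (ys y))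
  refine mem_iUnion.2 ⟨n, ys, (le_max_left _ _).trans hn, fitz_le_coe_iff.2 fun q hq => ?_⟩
  have hmono := hB _ hy q hq
  simp only [sub_apply, map_sub] at hmono
  linarith [le_max_right ‖ys‖ (ys y)]

lemma IsMonotoneOp.convexHull_opDom_subset_iUnion_fitzLevelDom (hB : IsMonotoneOp B) :
    convexHull ℝ (opDom B) ⊆ ⋃ n : ℕ, fitzLevelDom B n :=
  convexHull_min hB.opDom_subset_iUnion_fitzLevelDom <|
    (fitzLevelDom_mono.comp Nat.mono_cast).directed_le.convex_iUnion fun _ => convex_fitzLevelDom _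

section Averages

variable {ι : Type*} [Fintype ι] {w : ι → ℝ} {q : ι → X × (X →L[ℝ] ℝ)}

lemma IsMonotoneOp.apply_sum_le_sum (hB : IsMonotoneOp B) (hw0 : ∀ i, 0 ≤ w i)
    (hw1 : ∑ i, w i = 1) (hq : ∀ i, q i ∈ B) :
    (∑ i, w i • (q i).2) (∑ i, w i • (q i).1) ≤ ∑ i, w i * (q i).2 (q i).1 := by
  have h : 0 ≤ ∑ i, ∑ j, w i * w j * ((q i).2 - (q j).2) ((q i).1 - (q j).1) :=
    Finset.sum_nonneg fun i _ => Finset.sum_nonneg fun j _ =>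
      mul_nonneg (mul_nonneg (hw0 i) (hw0 j)) (hB _ (hq i) _ (hq j))
  have hdiag (a : ι → ℝ) : ∑ i, ∑ j, w i * w j * a i = ∑ i, w i * a i := by
    simp only [mul_right_comm (w _) (w _), ← Finset.mul_sum, hw1, mul_one]
  have hswap (a : ι → ι → ℝ) : ∑ i, ∑ j, w i * w j * a i j = ∑ i, ∑ j, w i * w j * a j i := by
    rw [Finset.sum_comm]
    exact Finset.sum_congr rfl fun i _ => Finset.sum_congr rfl fun j _ => by ring
  simp only [map_sub, sub_apply, mul_sub, Finset.sum_sub_distrib, hdiag] at h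
  rw [hswap fun i j => (q j).2 (q j).1, hdiag, hswap fun i j => (q i).2 (q j).1] at h
  simp only [map_sum, map_smul, sum_apply, smul_apply, smul_eq_mul, Finset.mul_sum, ← mul_assoc]
  linarith

lemma sum_mul_apply_sub_le_of_mem_fitzLevelDom {y : X} {r : ℝ} (hy : y ∈ fitzLevelDom B r)
    (hw0 : ∀ i, 0 ≤ w i) (hw1 : ∑ i, w i = 1) (hq : ∀ i, q i ∈ B) :
    ∑ i, w i * (q i).2 (y - (q i).1) ≤ r * (1 + ‖∑ i, w i • (q i).1‖) := by
  obtain ⟨ys, hys, hfitz⟩ := hy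
  set v := ∑ i, w i • (q i).1
  have hsum : ∑ i, w i * ((q i).2 y + ys (q i).1 - (q i).2 (q i).1) ≤ r :=
    calc _ ≤ ∑ i, w i * r := Finset.sum_le_sum fun i _ =>
          mul_le_mul_of_nonneg_left (fitz_le_coe_iff.1 hfitz _ (hq i)) (hw0 i)
      _ = r := by rw [← Finset.sum_mul, hw1, one_mul]
  have hsplit : ∑ i, w i * ((q i).2 y + ys (q i).1 - (q i).2 (q i).1)
      = ∑ i, w i * (q i).2 (y - (q i).1) + ys v := by
    simp only [v, map_sum, map_smul, map_sub, smul_eq_mul, ← Finset.sum_add_distrib]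
    exact Finset.sum_congr rfl fun i _ => by ring
  have hys_v : -ys v ≤ r * ‖v‖ := (neg_le_abs _).trans <|
    (ys.le_opNorm v).trans (mul_le_mul_of_nonneg_right hys (norm_nonneg v))
  linarith

end Averages

lemma IsMonotoneOp.neg_mul_norm_le_of_mem_convexHull (hB : IsMonotoneOp B) {x : X} {ε r : ℝ}
    (hε : 0 < ε) (hr : 0 ≤ r) (hball : Metric.ball x ε ⊆ fitzLevelDom B r) {k : X × ℝ}
    (hk : k ∈ convexHull ℝ ((fun p : X × (X →L[ℝ] ℝ) => (p.1 - x, p.2 (p.1 - x))) '' B)) :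
    -(r * (1 + (1 + ‖x‖) / ε) * ‖k.1‖) ≤ k.2 := by
  obtain ⟨ι, _, w, z, hw0, hw1, hz, rfl⟩ := mem_convexHull_iff_exists_fintype.1 hk
  choose q hq hqz using hz
  obtain rfl : z = fun i => ((q i).1 - x, (q i).2 ((q i).1 - x)) := funext fun i => (hqz i).symm
  set v := ∑ i, w i • (q i).1
  set as := ∑ i, w i • (q i).2
  set m := ∑ i, w i * (q i).2 ((q i).1 - x)
  have hk1 : (∑ i, w i • ((q i).1 - x, (q i).2 ((q i).1 - x))).1 = v - x := by
    simp [v, Prod.fst_sum, smul_sub, Finset.sum_sub_distrib, ← Finset.sum_smul, hw1]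
  have hk2 : (∑ i, w i • ((q i).1 - x, (q i).2 ((q i).1 - x))).2 = m := by
    simp [m, Prod.snd_sum]
  have hm : m = ∑ i, w i * (q i).2 (q i).1 - as x := by
    simp only [m, as, map_sub, mul_sub, Finset.sum_sub_distrib, sum_apply, smul_apply, smul_eq_mul]
  rw [hk1, hk2]
  have hmono : -m ≤ ‖as‖ * ‖v - x‖ := by
    have h := hB.apply_sum_le_sum hw0 hw1 hq
    have habs := (neg_le_abs (as (v - x))).trans (as.le_opNorm (v - x))
    rw [map_sub] at habs
    linarith
  have hbound : ε * ‖as‖ ≤ r * (1 + ‖x‖ + ‖v - x‖) + m := by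
    refine as.mul_norm_le_of_forall_ball_le hε fun h hh => ?_
    have hxh : x + h ∈ Metric.ball x ε := by
      rwa [mem_ball_iff_norm, add_sub_cancel_left, ← mem_ball_zero_iff]
    have h1 := sum_mul_apply_sub_le_of_mem_fitzLevelDom (hball hxh) hw0 hw1 hq
    have h2 : ∑ i, w i * (q i).2 (x + h - (q i).1) = as h - m := by
      simp only [hm, as, map_add, map_sub, mul_add, mul_sub, Finset.sum_add_distrib,
        Finset.sum_sub_distrib, sum_apply, smul_apply, smul_eq_mul]
      ring
    have h3 : ‖v‖ ≤ ‖x‖ + ‖v - x‖ := by simpa using norm_add_le x (v - x)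
    nlinarith
  set W := ‖v - x‖
  have h1 : -m * (ε + W) ≤ r * (1 + ‖x‖ + W) * W := by
    nlinarith [mul_le_mul_of_nonneg_right hbound (norm_nonneg (v - x)),
      mul_le_mul_of_nonneg_left hmono hε.le]
  have h2 : r * (1 + ‖x‖ + W) * W ≤ r * (1 + (1 + ‖x‖) / ε) * W * (ε + W) := by
    have : (1 + ‖x‖) / ε * ε = 1 + ‖x‖ := div_mul_cancel₀ _ hε.ne'
    have : 0 ≤ (1 + ‖x‖) / ε * W := by positivity
    have : 0 ≤ r * W := mul_nonneg hr (norm_nonneg _)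
    nlinarith
  linarith [le_of_mul_le_mul_right (h1.trans h2) (by positivity : 0 < ε + W)]

theorem IsMaxMonotoneOp.interior_convexHull_opDom_subset [CompleteSpace X]
    (hB : IsMaxMonotoneOp B) : interior (convexHull ℝ (opDom B)) ⊆ opDom B := by
  intro x hx
  obtain ⟨n, hn⟩ := exists_mem_interior_of_mem_interior_iUnion
    (fitzLevelDom_mono.comp Nat.mono_cast) (fun _ => isClosed_fitzLevelDom _)
    (fun _ => convex_fitzLevelDom _)
    (interior_mono hB.1.convexHull_opDom_subset_iUnion_fitzLevelDom hx)
  obtain ⟨ε, hε, hball⟩ := Metric.isOpen_iff.1 isOpen_interior x hn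
  obtain ⟨g, -, hg⟩ := exists_norm_le_forall_le_of_convexHull (by positivity) fun k hk =>
    hB.1.neg_mul_norm_le_of_mem_convexHull hε n.cast_nonneg (hball.trans interior_subset) hk
  refine ⟨g, hB.mem_of_monotonicallyRelated fun q hq => ?_⟩
  have := hg _ ⟨q, hq, rfl⟩
  simp only [sub_apply, map_sub] at this ⊢
  linarith

end

theorem fitz_sum_eq_top_of_boundary_seq_general {X : Type*} [NormedAddCommGroup X] [NormedSpace ℝ X]
    [CompleteSpace X]
    (A B : Set (X × (X →L[ℝ] ℝ)))
    (hB : IsMaxMonotoneOp B)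
    (z : X) (zs : X →L[ℝ] ℝ) (x₀ : X)
    (hx₀ : x₀ ∈ opDom A ∩ interior (opDom B))
    (lam : ℝ) (hlam0 : 0 ≤ lam) (hlam1 : lam < 1)
    (a : ℕ → X)
    (hdom : ∀ n, a n ∈ opDom A ∩ opDom B)
    (hconv : Filter.Tendsto a Filter.atTop (nhds (x₀ + lam • (z - x₀))))
    (hbdry : ∀ n, a n ∈ closure (opDom B) \ interior (opDom B)) :
    fitz (opSum A B) (z, zs) = ⊤ := by
  have hint : interior (convexHull ℝ (opDom B)) ⊆ interior (opDom B) :=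
    interior_maximal hB.interior_convexHull_opDom_subset isOpen_interior
  have hsub : interior (opDom B) ⊆ interior (convexHull ℝ (opDom B)) :=
    interior_mono (subset_convexHull ℝ _)
  obtain ⟨r, hr, hball⟩ := Metric.isOpen_iff.1 isOpen_interior x₀ hx₀.2
  obtain ⟨n, hn⟩ := (hconv.eventually (Metric.ball_mem_nhds _
    (mul_pos (sub_pos.2 hlam1) hr))).exists
  -- `z` lies on the ray from the interior point `y` through `a n`, beyond `a n`.
  obtain ⟨y, hy, hray⟩ := exists_mem_ball_smul_sub_eq_smul_sub hlam1 hn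
  obtain ⟨f, hfint, hfC⟩ := (convex_convexHull ℝ (opDom B)).exists_forall_le_of_notMem_interior
    ⟨x₀, hsub hx₀.2⟩ fun h => (hbdry n).2 (hint h)
  have hfz : f (a n) < f z := by
    have hpos : 0 < lam * (f z - f (a n)) := by
      rw [← map_sub, ← smul_eq_mul, ← map_smul, hray, map_smul, smul_eq_mul, map_sub]
      exact mul_pos (sub_pos.2 hlam1) (sub_pos.2 (hfint y (hsub (hball hy))))
    exact sub_pos.1 (pos_of_mul_pos_right hpos hlam0)
  obtain ⟨⟨as, has⟩, ⟨bs, hbs⟩⟩ := hdom n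
  refine fitz_eq_top_of_forall_add_smul_mem (xs := as + bs) (fun t ht => ?_) hfz
  exact ⟨as, bs + t • f, has,
    hB.add_smul_mem hbs (fun d hd => hfC d (subset_convexHull ℝ _ hd)) ht, add_assoc _ _ _⟩

/-- a sequence in `dom A ∩ dom B` lying on the boundary of `dom B`
forces the Fitzpatrick function of the sum to be `+∞`. -/
theorem fitz_sum_eq_top_of_boundary_seq {X : Type*} [NormedAddCommGroup X] [NormedSpace ℝ X]
    [CompleteSpace X]
    (A B : Set (X × (X →L[ℝ] ℝ)))
    (hA : IsMonotoneOp A) (hB : IsMaxMonotoneOp B)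
    (z : X) (zs : X →L[ℝ] ℝ) (x₀ : X)
    (hx₀ : x₀ ∈ opDom A ∩ interior (opDom B))
    (lam : ℝ) (hlam0 : 0 ≤ lam) (hlam1 : lam < 1)
    (a : ℕ → X)
    (hdom : ∀ n, a n ∈ opDom A ∩ opDom B)
    (hconv : Filter.Tendsto a Filter.atTop (nhds (x₀ + lam • (z - x₀))))
    (hbdry : ∀ n, a n ∈ closure (opDom B) \ interior (opDom B)) :
    fitz (opSum A B) (z, zs) = ⊤ :=
  fitz_sum_eq_top_of_boundary_seq_general A B hB z zs x₀ hx₀ lam hlam0 hlam1 a hdom hconv hbdry
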